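/- arXiv:2605.12670 — 2 statements merged into one kernel-verified Lean document; each statement's English description precedes it below -/
import Mathlib

section
/- Let (K, ∂) be a differential field of characteristic 0 and let E be a field extension of K equipped with a derivation ∂' extending ∂. Then the map D¹ on the E-vector space Ω(E/K) of Kähler differentials determined by D¹(f·dg) = ∂'(f)·dg + f·d(∂'(g)) is a well-defined additive map satisfying D¹(df) = d(∂'(f)) and giving Ω(E/K) the structure of a ∂'-module over E, i.e., D¹(e·ω) = e·D¹(ω) + ∂'(e)·ω for e ∈ E, ω ∈ Ω(E/K). -/
/-- Let `(K, δ)` be a differential field of characteristic 0 and `E/K` a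
field extension with a derivation `δ'` of `E` extending `δ`. Then there is a (unique)
additive map `D¹` on the Kähler differentials `Ω[E⁄K]` with `D¹(f·dg) = δ'(f)·dg + f·d(δ'(g))`,
satisfying `D¹(df) = d(δ'(f))` and making `Ω[E⁄K]` a `δ'`-module over `E`:
`D¹(e·ω) = e·D¹(ω) + δ'(e)·ω`. -/
theorem lie_derivative_exists
    (K : Type*) [Field K] [CharZero K]
    (E : Type*) [Field E] [Algebra K E]
    (δ : K → K)
    (hδadd : ∀ x y : K, δ (x + y) = δ x + δ y)
    (hδmul : ∀ x y : K, δ (x * y) = x * δ y + δ x * y)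
    (δ' : E → E)
    (hδ'add : ∀ x y : E, δ' (x + y) = δ' x + δ' y)
    (hδ'mul : ∀ x y : E, δ' (x * y) = x * δ' y + δ' x * y)
    (hext : ∀ a : K, δ' (algebraMap K E a) = algebraMap K E (δ a)) :
    ∃! D1 : Ω[E⁄K] → Ω[E⁄K],
      (∀ ω η : Ω[E⁄K], D1 (ω + η) = D1 ω + D1 η) ∧
      (∀ f g : E, D1 (f • (KaehlerDifferential.D K E g)) =
        δ' f • (KaehlerDifferential.D K E g) + f • (KaehlerDifferential.D K E (δ' g))) ∧
      (∀ f : E, D1 (KaehlerDifferential.D K E f) = KaehlerDifferential.D K E (δ' f)) ∧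
      (∀ (e : E) (ω : Ω[E⁄K]), D1 (e • ω) = e • D1 ω + δ' e • ω) := by
  classical
  -- basic facts about δ'
  have hδ'0 : δ' 0 = 0 := by
    have h := hδ'add 0 0
    rw [add_zero] at h
    exact (left_eq_add.mp h)
  have hδ'1 : δ' 1 = 0 := by
    have h := hδ'mul 1 1
    rw [mul_one, one_mul, mul_one] at h
    exact (left_eq_add.mp h)
  -- the linear combination map T : (E →₀ E) → Ω[E⁄K]
  set T : (E →₀ E) →ₗ[E] Ω[E⁄K] :=
    Finsupp.linearCombination E (KaehlerDifferential.D K E) with hT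
  have hTsurj : Function.Surjective T :=
    KaehlerDifferential.linearCombination_surjective K E
  have hTsingle : ∀ g f : E, T (Finsupp.single g f) = f • KaehlerDifferential.D K E g := by
    intro g f; simp [hT, Finsupp.linearCombination_single]
  -- the lift L of the Lie derivative to the free module
  have Lzero : (fun w : E →₀ E =>
      w.sum fun g f => Finsupp.single g (δ' f) + Finsupp.single (δ' g) f) 0 = 0 :=
    Finsupp.sum_zero_index
  have Ladd' : ∀ w₁ w₂ : E →₀ E,
      (w₁ + w₂).sum (fun g f => Finsupp.single g (δ' f) + Finsupp.single (δ' g) f) =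
      w₁.sum (fun g f => Finsupp.single g (δ' f) + Finsupp.single (δ' g) f) +
      w₂.sum (fun g f => Finsupp.single g (δ' f) + Finsupp.single (δ' g) f) := by
    intro w₁ w₂
    refine Finsupp.sum_add_index' (fun g => by simp [hδ'0]) ?_
    intro g f₁ f₂
    rw [hδ'add, Finsupp.single_add, Finsupp.single_add]
    abel
  set L : (E →₀ E) →+ (E →₀ E) :=
    { toFun := fun w => w.sum fun g f => Finsupp.single g (δ' f) + Finsupp.single (δ' g) f
      map_zero' := Lzero
      map_add' := Ladd' } with hL
  have Lsingle : ∀ g f : E,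
      L (Finsupp.single g f) = Finsupp.single g (δ' f) + Finsupp.single (δ' g) f := by
    intro g f
    have h0 : Finsupp.single g (δ' (0:E)) + Finsupp.single (δ' g) (0:E) = 0 := by
      rw [hδ'0, Finsupp.single_zero, Finsupp.single_zero, add_zero]
    exact Finsupp.sum_single_index
      (h := fun g f => Finsupp.single g (δ' f) + Finsupp.single (δ' g) f) h0
  -- L is a "δ'-module" map on the free module
  have Lsmul : ∀ (e : E) (w : E →₀ E), L (e • w) = e • L w + δ' e • w := by
    intro e w
    induction w using Finsupp.induction_linear with
    | zero => simp
    | add w₁ w₂ h₁ h₂ =>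
      rw [smul_add, map_add, h₁, h₂, map_add, smul_add, smul_add]
      abel
    | single g f =>
      rw [Finsupp.smul_single', Lsingle, Lsingle, hδ'mul, Finsupp.single_add]
      simp only [smul_add, Finsupp.smul_single']
      abel
  -- L preserves kerTotal
  have Lker : ∀ w ∈ KaehlerDifferential.kerTotal K E, L w ∈ KaehlerDifferential.kerTotal K E := by
    intro w hw
    induction hw using Submodule.span_induction with
    | mem x hx =>
      rcases hx with (⟨⟨a, b⟩, rfl⟩ | ⟨⟨a, b⟩, rfl⟩) | ⟨a, rfl⟩
      · -- additivity relation
        rw [map_sub, map_add, Lsingle, Lsingle, Lsingle, hδ'1, hδ'add]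
        simp only [Finsupp.single_zero, zero_add]
        exact Submodule.subset_span (Or.inl (Or.inl ⟨(δ' a, δ' b), rfl⟩))
      · -- Leibniz relation
        rw [map_sub, map_add, Lsingle, Lsingle, Lsingle, hδ'1]
        simp only [Finsupp.single_zero, zero_add]
        have key : Finsupp.single b (δ' a) + Finsupp.single (δ' b) a +
            (Finsupp.single a (δ' b) + Finsupp.single (δ' a) b) -
            Finsupp.single (δ' (a * b)) 1 =
            (Finsupp.single b (δ' a) + Finsupp.single (δ' a) b
              - Finsupp.single (δ' a * b) 1) +
            (Finsupp.single (δ' b) a + Finsupp.single a (δ' b)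
              - Finsupp.single (a * δ' b) 1) +
            (Finsupp.single (a * δ' b) 1 + Finsupp.single (δ' a * b) 1
              - Finsupp.single (a * δ' b + δ' a * b) 1) := by
          rw [hδ'mul a b]
          abel
        rw [key]
        refine Submodule.add_mem _ (Submodule.add_mem _ ?_ ?_) ?_
        · exact Submodule.subset_span (Or.inl (Or.inr ⟨(δ' a, b), rfl⟩))
        · exact Submodule.subset_span (Or.inl (Or.inr ⟨(a, δ' b), rfl⟩))
        · exact Submodule.subset_span (Or.inl (Or.inl ⟨(a * δ' b, δ' a * b), rfl⟩))
      · -- algebraMap relation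
        rw [Lsingle, hδ'1, hext]
        simp only [Finsupp.single_zero, zero_add]
        exact Submodule.subset_span (Or.inr ⟨δ a, rfl⟩)
    | zero => rw [map_zero]; exact (KaehlerDifferential.kerTotal K E).zero_mem
    | add x y hx hy ihx ihy => rw [map_add]; exact Submodule.add_mem _ ihx ihy
    | smul e x hx ihx =>
      rw [Lsmul]
      exact Submodule.add_mem _ (Submodule.smul_mem _ _ ihx) (Submodule.smul_mem _ _ hx)
  have LkerT : ∀ w ∈ LinearMap.ker T, L w ∈ LinearMap.ker T := by
    intro w hw
    rw [hT, KaehlerDifferential.kerTotal_eq] at *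
    exact Lker w hw
  -- section of T
  set s : Ω[E⁄K] → (E →₀ E) := Function.surjInv hTsurj with hs
  have hsT : ∀ ω, T (s ω) = ω := fun ω => Function.surjInv_eq hTsurj ω
  -- the Lie derivative
  set D1 : Ω[E⁄K] → Ω[E⁄K] := fun ω => T (L (s ω)) with hD1
  have key : ∀ w : E →₀ E, D1 (T w) = T (L w) := by
    intro w
    have h1 : s (T w) - w ∈ LinearMap.ker T := by
      rw [LinearMap.mem_ker, map_sub, hsT, sub_self]
    have h2 := LkerT _ h1
    rw [LinearMap.mem_ker, map_sub, map_sub, sub_eq_zero] at h2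
    exact h2
  -- properties
  have prop_add : ∀ ω η : Ω[E⁄K], D1 (ω + η) = D1 ω + D1 η := by
    intro ω η
    obtain ⟨w, rfl⟩ := hTsurj ω
    obtain ⟨v, rfl⟩ := hTsurj η
    rw [← map_add, key, key, key, map_add, map_add]
  have prop_fdg : ∀ f g : E, D1 (f • (KaehlerDifferential.D K E g)) =
      δ' f • (KaehlerDifferential.D K E g) + f • (KaehlerDifferential.D K E (δ' g)) := by
    intro f g
    rw [← hTsingle g f, key, Lsingle, map_add, hTsingle, hTsingle]
  have prop_d : ∀ f : E, D1 (KaehlerDifferential.D K E f) = KaehlerDifferential.D K E (δ' f) := by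
    intro f
    have := prop_fdg 1 f
    rw [one_smul, one_smul, hδ'1, zero_smul, zero_add] at this
    exact this
  have prop_smul : ∀ (e : E) (ω : Ω[E⁄K]), D1 (e • ω) = e • D1 ω + δ' e • ω := by
    intro e ω
    obtain ⟨w, rfl⟩ := hTsurj ω
    rw [← map_smul, key, Lsmul, map_add, map_smul, map_smul, key]
  refine ⟨D1, ⟨prop_add, prop_fdg, prop_d, prop_smul⟩, ?_⟩
  -- uniqueness
  rintro D2 ⟨h2add, h2fdg, _, _⟩
  funext ω
  obtain ⟨w, rfl⟩ := hTsurj ω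
  have hz : ∀ (D : Ω[E⁄K] → Ω[E⁄K]), (∀ ω η, D (ω + η) = D ω + D η) → D 0 = 0 := by
    intro D hD
    have := hD 0 0
    rw [add_zero] at this
    exact (left_eq_add.mp this)
  induction w using Finsupp.induction_linear with
  | zero => rw [map_zero, hz D2 h2add, hz D1 prop_add]
  | add w₁ w₂ h₁ h₂ => rw [map_add, h2add, prop_add, h₁, h₂]
  | single g f => rw [hTsingle, h2fdg, prop_fdg]
end

section
/- Let E/K be a field extension with a derivation ∂ of E preserving K, and let D¹ be the induced Lie derivative on Ω(E/K). Suppose a, b ∈ E with b ≠ 0 and ∂(a) = ∂(b)/b. Then the differential form ω = da − db/b ∈ Ω(E/K) satisfies D¹(ω) = 0. -/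
/-!
Since `db / b` is the logarithmic differential of `b`, the Lie derivative of `db / b` is
`d(∂b / b)`: expanding `D¹(b⁻¹ • db)` by the Leibniz rules for `∂` and `d`, the terms in `db`
cancel. Hence `D¹(da − db / b) = d(∂a) − d(∂b / b)`, which vanishes when `∂a = ∂b / b`.
-/

theorem map_one_eq_zero_of_leibniz {A : Type*} [NonAssocRing A] {δ : A → A}
    (hδmul : ∀ x y : A, δ (x * y) = x * δ y + δ x * y) : δ 1 = 0 := by
  simpa using hδmul 1 1

section Leibniz

variable {E : Type*} [Field E] {δ : E → E}

theorem map_inv_eq_of_leibniz (hδmul : ∀ x y : E, δ (x * y) = x * δ y + δ x * y)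
    {b : E} (hb : b ≠ 0) : δ b⁻¹ = -(δ b * b⁻¹ * b⁻¹) := by
  have h := hδmul b b⁻¹
  rw [mul_inv_cancel₀ hb, map_one_eq_zero_of_leibniz hδmul] at h
  linear_combination -b⁻¹ * h - δ b⁻¹ * inv_mul_cancel₀ hb

theorem lieDerivative_logDifferential {R : Type*} [CommRing R] [Algebra R E]
    (hδmul : ∀ x y : E, δ (x * y) = x * δ y + δ x * y) (D1 : Ω[E⁄R] → Ω[E⁄R])
    (hD1d : ∀ f : E, D1 (KaehlerDifferential.D R E f) = KaehlerDifferential.D R E (δ f))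
    (hD1smul : ∀ (f : E) (ω : Ω[E⁄R]), D1 (f • ω) = δ f • ω + f • D1 ω)
    {b : E} (hb : b ≠ 0) :
    D1 (b⁻¹ • KaehlerDifferential.D R E b) = KaehlerDifferential.D R E (δ b / b) := by
  rw [hD1smul, hD1d, map_inv_eq_of_leibniz hδmul hb, div_eq_mul_inv, Derivation.leibniz,
    Derivation.leibniz_inv]
  module

end Leibniz

theorem lie_derivative_kills_ax_form_general
    (K : Type*) [Field K] (E : Type*) [Field E] [Algebra K E]
    (δ : E → E)
    (hδmul : ∀ x y : E, δ (x * y) = x * δ y + δ x * y)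
    (D1 : Ω[E⁄K] → Ω[E⁄K])
    (hD1add : ∀ ω η : Ω[E⁄K], D1 (ω + η) = D1 ω + D1 η)
    (hD1d : ∀ f : E, D1 (KaehlerDifferential.D K E f) = KaehlerDifferential.D K E (δ f))
    (hD1smul : ∀ (f : E) (ω : Ω[E⁄K]), D1 (f • ω) = δ f • ω + f • D1 ω)
    (a b : E) (hb : b ≠ 0) (hab : δ a = δ b / b) :
    D1 (KaehlerDifferential.D K E a - b⁻¹ • KaehlerDifferential.D K E b) = 0 := by
  rw [show D1 _ = D1 _ - D1 _ from map_sub (AddMonoidHom.mk' D1 hD1add) _ _, hD1d,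
    lieDerivative_logDifferential hδmul D1 hD1d hD1smul hb, hab, sub_self]

/-- (Claim 3 / Lemma 3 of Ax) With `D¹` the Lie derivative on `Ω[E⁄K]`
induced by a derivation `δ` of `E` preserving `K`, if `a, b ∈ E`, `b ≠ 0` and
`δ(a) = δ(b)/b`, then `ω = da − db/b` satisfies `D¹(ω) = 0`. -/
theorem lie_derivative_kills_ax_form
    (K : Type*) [Field K] (E : Type*) [Field E] [Algebra K E]
    (δ : E → E)
    (hδadd : ∀ x y : E, δ (x + y) = δ x + δ y)
    (hδmul : ∀ x y : E, δ (x * y) = x * δ y + δ x * y)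
    (hK : ∀ a : K, ∃ b : K, δ (algebraMap K E a) = algebraMap K E b)
    (D1 : Ω[E⁄K] → Ω[E⁄K])
    (hD1add : ∀ ω η : Ω[E⁄K], D1 (ω + η) = D1 ω + D1 η)
    (hD1d : ∀ f : E, D1 (KaehlerDifferential.D K E f) = KaehlerDifferential.D K E (δ f))
    (hD1smul : ∀ (f : E) (ω : Ω[E⁄K]), D1 (f • ω) = δ f • ω + f • D1 ω)
    (a b : E) (hb : b ≠ 0) (hab : δ a = δ b / b) :
    D1 (KaehlerDifferential.D K E a - b⁻¹ • KaehlerDifferential.D K E b) = 0 :=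
  lie_derivative_kills_ax_form_general K E δ hδmul D1 hD1add hD1d hD1smul a b hb hab
end
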